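/- arXiv:1901.11150 — 9 statements merged into one kernel-verified Lean document; each statement's English description precedes it below -/
import Mathlib

section
/- For every t ∈ {1,…,T} and every coordinate i ∈ {1,…,d}, the SM3-I accumulator dominates the Adagrad accumulator: ν_t(i) ≥ ∑_{s=1}^t g_s(i)², i.e. ν_t(i) ≥ γ_t(i). -/
open Finset

/-- For every `t ∈ {1,…,T}` and every coordinate `i`, the SM3-I
accumulator dominates the Adagrad accumulator: `ν t i ≥ ∑_{s=1}^t g s i ^ 2`. -/
theorem sm3_I_dominates_adagrad
    (d k T : ℕ) (hd : 0 < d) (hk : 0 < k) (hT : 0 < T)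
    (S : Fin k → Finset (Fin d))
    (hS : ∀ r, (S r).Nonempty)
    (hcover : ∀ i : Fin d, ∃ r, i ∈ S r)
    (g : ℕ → Fin d → ℝ)
    (μ : ℕ → Fin k → ℝ) (ν : ℕ → Fin d → ℝ)
    (hμ : ∀ t r, μ t r = ∑ s ∈ Finset.Icc 1 t, (S r).sup' (hS r) (fun j => g s j ^ 2))
    (hν : ∀ t (i : Fin d), ν t i =
      (Finset.univ.filter (fun r => i ∈ S r)).inf'
        (by obtain ⟨r, hr⟩ := hcover i
            exact ⟨r, Finset.mem_filter.mpr ⟨Finset.mem_univ r, hr⟩⟩)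
        (fun r => μ t r)) :
    ∀ t ∈ Finset.Icc 1 T, ∀ i : Fin d,
      (∑ s ∈ Finset.Icc 1 t, g s i ^ 2) ≤ ν t i := by
  intro t _ i
  rw [hν]
  apply Finset.le_inf'
  intro r hr
  rw [hμ]
  apply Finset.sum_le_sum
  intro s _
  exact Finset.le_sup' (fun j => g s j ^ 2) ((Finset.mem_filter.mp hr).2)
end

section
/- With the Adagrad accumulators γ_t(i) = ∑_{s=1}^t g_s(i)², the sum of squared dual norms is bounded by twice the trace of the final preconditioner: ∑_{t=1}^T ∑_{i : γ_t(i) > 0} g_t(i)²/√(γ_t(i)) ≤ 2 ∑_{i=1}^d √(γ_T(i)). -/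
open Finset

lemma adagrad_aux (a : ℕ → ℝ) (ha : ∀ s, 0 ≤ a s) :
    ∀ T : ℕ, ∑ t ∈ Finset.Icc 1 T, a t / Real.sqrt (∑ s ∈ Finset.Icc 1 t, a s)
      ≤ 2 * Real.sqrt (∑ s ∈ Finset.Icc 1 T, a s) := by
  intro T
  induction T with
  | zero => simp
  | succ T ih =>
    rw [Finset.sum_Icc_succ_top (by omega), Finset.sum_Icc_succ_top (by omega : 1 ≤ T + 1)]
    set B := ∑ s ∈ Finset.Icc 1 T, a s with hB
    have hBnn : 0 ≤ B := Finset.sum_nonneg fun s _ => ha s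
    set A := B + a (T + 1) with hA
    have hAnn : 0 ≤ A := add_nonneg hBnn (ha _)
    rcases eq_or_lt_of_le hAnn with h0 | hpos
    · have haz : a (T + 1) = 0 := by nlinarith [ha (T + 1)]
      have hBz : B = 0 := by nlinarith [ha (T + 1)]
      have h2 : ∑ t ∈ Finset.Icc 1 T, a t / Real.sqrt (∑ s ∈ Finset.Icc 1 t, a s) ≤ 0 := by
        calc _ ≤ 2 * Real.sqrt B := ih
        _ = 0 := by rw [hBz]; simp
      have hsA : 0 ≤ 2 * Real.sqrt A := by positivity
      rw [haz]
      simp only [zero_div, add_zero]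
      linarith
    · have hsB : Real.sqrt B ≤ Real.sqrt A :=
        Real.sqrt_le_sqrt (by nlinarith [ha (T + 1)])
      have hsA : 0 < Real.sqrt A := Real.sqrt_pos.mpr hpos
      have h1 : a (T + 1) / Real.sqrt A ≤ 2 * Real.sqrt A - 2 * Real.sqrt B := by
        rw [div_le_iff₀ hsA]
        nlinarith [Real.sq_sqrt hAnn, Real.sq_sqrt hBnn, Real.sqrt_nonneg B]
      calc ∑ t ∈ Finset.Icc 1 T, a t / Real.sqrt (∑ s ∈ Finset.Icc 1 t, a s)
            + a (T + 1) / Real.sqrt A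
          ≤ 2 * Real.sqrt B + (2 * Real.sqrt A - 2 * Real.sqrt B) := by
            exact add_le_add ih h1
        _ = 2 * Real.sqrt A := by ring

/-- With the Adagrad accumulators `γ t i = ∑_{s=1}^t g s i ^ 2`, the sum of
squared dual norms is bounded by twice the trace of the final preconditioner:
`∑_{t=1}^T ∑_{i : γ t i > 0} g t i ^ 2 / √(γ t i) ≤ 2 ∑ i, √(γ T i)`. -/
theorem adagrad_dual_norm_sum_bound
    (d T : ℕ) (hd : 0 < d) (hT : 0 < T)
    (g : ℕ → Fin d → ℝ)
    (γ : ℕ → Fin d → ℝ)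
    (hγ : ∀ t (i : Fin d), γ t i = ∑ s ∈ Finset.Icc 1 t, g s i ^ 2) :
    ∑ t ∈ Finset.Icc 1 T, ∑ i ∈ Finset.univ.filter (fun i : Fin d => 0 < γ t i),
        g t i ^ 2 / Real.sqrt (γ t i)
      ≤ 2 * ∑ i : Fin d, Real.sqrt (γ T i) := by
  have hstep : ∀ t ∈ Finset.Icc 1 T,
      ∑ i ∈ Finset.univ.filter (fun i : Fin d => 0 < γ t i),
        g t i ^ 2 / Real.sqrt (γ t i)
      = ∑ i : Fin d, g t i ^ 2 / Real.sqrt (γ t i) := by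
    intro t ht
    rw [Finset.sum_filter]
    apply Finset.sum_congr rfl
    intro i _
    by_cases h : 0 < γ t i
    · simp [h]
    · have hnn : 0 ≤ γ t i := by
        rw [hγ]; exact Finset.sum_nonneg fun s _ => sq_nonneg _
      have hz : γ t i = 0 := le_antisymm (not_lt.mp h) hnn
      have htmem : t ∈ Finset.Icc 1 t := by
        simp at ht ⊢; omega
      have : g t i ^ 2 = 0 := by
        have h3 := Finset.single_le_sum (f := fun s => g s i ^ 2)
          (fun s _ => sq_nonneg _) htmem
        rw [← hγ, hz] at h3
        nlinarith [sq_nonneg (g t i)]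
      simp [h, this]
  rw [Finset.sum_congr rfl hstep, Finset.sum_comm, Finset.mul_sum]
  apply Finset.sum_le_sum
  intro i _
  simp only [hγ]
  exact adagrad_aux (fun s => g s i ^ 2) (fun s => sq_nonneg _) T
end

section
/- With the SM3-I accumulators ν_t(i), the sum of squared dual norms of the gradients with respect to the SM3 preconditioners is bounded by twice the trace of the final preconditioner: ∑_{t=1}^T ∑_{i : ν_t(i) > 0} g_t(i)²/√(ν_t(i)) ≤ 2 ∑_{i=1}^d √(ν_T(i)). -/
open Finset

/-- With the SM3-I accumulators `ν t i`, the sum of squared dual norms of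
the gradients is bounded by twice the trace of the final preconditioner:
`∑_{t=1}^T ∑_{i : ν t i > 0} g t i ^ 2 / √(ν t i) ≤ 2 ∑ i, √(ν T i)`. -/
theorem sm3_I_dual_norm_sum_bound
    (d k T : ℕ) (hd : 0 < d) (hk : 0 < k) (hT : 0 < T)
    (S : Fin k → Finset (Fin d))
    (hS : ∀ r, (S r).Nonempty)
    (hcover : ∀ i : Fin d, ∃ r, i ∈ S r)
    (g : ℕ → Fin d → ℝ)
    (μ : ℕ → Fin k → ℝ) (ν : ℕ → Fin d → ℝ)
    (hμ : ∀ t r, μ t r = ∑ s ∈ Finset.Icc 1 t, (S r).sup' (hS r) (fun j => g s j ^ 2))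
    (hν : ∀ t (i : Fin d), ν t i =
      (Finset.univ.filter (fun r => i ∈ S r)).inf'
        (by obtain ⟨r, hr⟩ := hcover i
            exact ⟨r, Finset.mem_filter.mpr ⟨Finset.mem_univ r, hr⟩⟩)
        (fun r => μ t r)) :
    ∑ t ∈ Finset.Icc 1 T, ∑ i ∈ Finset.univ.filter (fun i : Fin d => 0 < ν t i),
        g t i ^ 2 / Real.sqrt (ν t i)
      ≤ 2 * ∑ i : Fin d, Real.sqrt (ν T i) := by
  have hsup0 : ∀ (s : ℕ) r, 0 ≤ (S r).sup' (hS r) (fun j => g s j ^ 2) := by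
    intro s r
    obtain ⟨j, hj⟩ := hS r
    exact le_trans (sq_nonneg (g s j)) (Finset.le_sup' (f := fun j => g s j ^ 2) hj)
  have hν0 : ∀ i, ν 0 i = 0 := by
    intro i; rw [hν]; simp [hμ]
  have hμstep : ∀ n r, μ (n+1) r = μ n r + (S r).sup' (hS r) (fun j => g (n+1) j ^ 2) := by
    intro n r
    rw [hμ, hμ, Finset.sum_Icc_succ_top (Nat.succ_le_succ (Nat.zero_le n))]
  have hνnonneg : ∀ t i, 0 ≤ ν t i := by
    intro t i
    rw [hν]
    apply Finset.le_inf'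
    intro r _
    rw [hμ]
    exact Finset.sum_nonneg fun s _ => hsup0 s r
  have hkey : ∀ n i, ν n i + g (n+1) i ^ 2 ≤ ν (n+1) i := by
    intro n i
    rw [hν (n+1) i]
    apply Finset.le_inf'
    intro r hr
    have hi : i ∈ S r := (Finset.mem_filter.mp hr).2
    have h1 : ν n i ≤ μ n r := by rw [hν]; exact Finset.inf'_le _ hr
    have h2 : g (n+1) i ^ 2 ≤ (S r).sup' (hS r) (fun j => g (n+1) j ^ 2) :=
      Finset.le_sup' (f := fun j => g (n+1) j ^ 2) hi
    rw [hμstep]; linarith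
  have hmono : ∀ n i, ν n i ≤ ν (n+1) i := fun n i =>
    le_trans (le_add_of_nonneg_right (sq_nonneg _)) (hkey n i)
  have hterm : ∀ n i, 0 < ν (n+1) i →
      g (n+1) i ^ 2 / Real.sqrt (ν (n+1) i)
        ≤ 2 * (Real.sqrt (ν (n+1) i) - Real.sqrt (ν n i)) := by
    intro n i hpos
    have ha : (0:ℝ) ≤ ν n i := hνnonneg n i
    have hsa : Real.sqrt (ν n i) ^ 2 = ν n i := Real.sq_sqrt ha
    have hsb : Real.sqrt (ν (n+1) i) ^ 2 = ν (n+1) i := Real.sq_sqrt hpos.le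
    have hsbpos : 0 < Real.sqrt (ν (n+1) i) := Real.sqrt_pos.mpr hpos
    have hg : g (n+1) i ^ 2 ≤ ν (n+1) i - ν n i := by have := hkey n i; linarith
    rw [div_le_iff₀ hsbpos]
    nlinarith [Real.sqrt_nonneg (ν n i), sq_nonneg (Real.sqrt (ν (n+1) i) - Real.sqrt (ν n i))]
  have hstep : ∀ n : ℕ,
      ∑ i ∈ Finset.univ.filter (fun i : Fin d => 0 < ν (n+1) i),
          g (n+1) i ^ 2 / Real.sqrt (ν (n+1) i)
        ≤ ∑ i : Fin d, 2 * (Real.sqrt (ν (n+1) i) - Real.sqrt (ν n i)) := by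
    intro n
    have hnn : ∀ i : Fin d, 0 ≤ 2 * (Real.sqrt (ν (n+1) i) - Real.sqrt (ν n i)) := by
      intro i
      have := Real.sqrt_le_sqrt (hmono n i)
      linarith
    calc ∑ i ∈ Finset.univ.filter (fun i : Fin d => 0 < ν (n+1) i),
            g (n+1) i ^ 2 / Real.sqrt (ν (n+1) i)
        ≤ ∑ i ∈ Finset.univ.filter (fun i : Fin d => 0 < ν (n+1) i),
            2 * (Real.sqrt (ν (n+1) i) - Real.sqrt (ν n i)) := by
          apply Finset.sum_le_sum
          intro i hi
          exact hterm n i (Finset.mem_filter.mp hi).2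
      _ ≤ ∑ i : Fin d, 2 * (Real.sqrt (ν (n+1) i) - Real.sqrt (ν n i)) := by
          apply Finset.sum_le_sum_of_subset_of_nonneg (Finset.filter_subset _ _)
          intro i _ _
          exact hnn i
  have tele : ∀ (f : ℕ → ℝ) (n : ℕ), ∑ t ∈ Finset.Icc 1 n, (f t - f (t-1)) = f n - f 0 := by
    intro f n
    induction n with
    | zero => simp
    | succ m ih =>
      rw [Finset.sum_Icc_succ_top (Nat.succ_le_succ (Nat.zero_le m)), ih]
      simp
  calc ∑ t ∈ Finset.Icc 1 T, ∑ i ∈ Finset.univ.filter (fun i : Fin d => 0 < ν t i),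
          g t i ^ 2 / Real.sqrt (ν t i)
      ≤ ∑ t ∈ Finset.Icc 1 T, ∑ i : Fin d,
          2 * (Real.sqrt (ν t i) - Real.sqrt (ν (t-1) i)) := by
        apply Finset.sum_le_sum
        intro t ht
        have h1 : 1 ≤ t := (Finset.mem_Icc.mp ht).1
        have he : t - 1 + 1 = t := Nat.succ_pred_eq_of_pos h1
        have := hstep (t - 1)
        rw [he] at this
        exact this
    _ = ∑ i : Fin d, 2 * ∑ t ∈ Finset.Icc 1 T,
          (Real.sqrt (ν t i) - Real.sqrt (ν (t-1) i)) := by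
        rw [Finset.sum_comm]
        exact Finset.sum_congr rfl fun i _ => (Finset.mul_sum _ _ _).symm
    _ = 2 * ∑ i : Fin d, Real.sqrt (ν T i) := by
        rw [Finset.mul_sum]
        apply Finset.sum_congr rfl
        intro i _
        rw [tele (fun t => Real.sqrt (ν t i)) T, hν0, Real.sqrt_zero, sub_zero]
end

section
/- For any learning rate η > 0, the SM3-I iterates satisfy the regret bound ∑_{t=1}^T (ℓ_t(w_t) − ℓ_t(w*)) ≤ (D²/(2η) + η) · ∑_{i=1}^d √(ν_T(i)), where D ≥ max_{1≤t≤T} ‖w_t − w*‖_∞. -/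
open Finset

private lemma tele_aux (a x : ℕ → ℝ) (D2 : ℝ) (ha0 : a 0 = 0)
    (hnn : ∀ s, 0 ≤ a s) (hmono : ∀ s, a s ≤ a (s+1)) :
    ∀ n : ℕ, (∀ s ∈ Finset.range n, x (s+1)^2 ≤ D2) →
      ∑ s ∈ Finset.range n, a (s+1) * (x (s+1)^2 - x (s+2)^2)
        ≤ D2 * a n - a n * x (n+1)^2 := by
  intro n
  induction n with
  | zero => intro _; simp [ha0]
  | succ n ih =>
    intro hx
    rw [Finset.sum_range_succ]
    have h1 := ih (fun s hs => hx s (Finset.mem_range.mpr (Nat.lt_succ_of_lt (Finset.mem_range.mp hs))))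
    have h2 : x (n+1)^2 ≤ D2 := hx n (Finset.mem_range.mpr (Nat.lt_succ_self n))
    have h3 := hmono n
    have h4 := hnn n
    have h5 := hnn (n+1)
    nlinarith [mul_nonneg (sub_nonneg.mpr h3) (sub_nonneg.mpr h2)]

/-- For any learning rate `η > 0`, the SM3-I iterates satisfy the regret
bound `∑_{t=1}^T (ℓ t (w t) − ℓ t w*) ≤ (D²/(2η) + η) ∑ i √(ν T i)`, where
`D ≥ max_t ‖w t − w*‖_∞`. -/
theorem sm3_I_regret_bound_general_lr
    (d k T : ℕ) (hd : 0 < d) (hk : 0 < k) (hT : 0 < T)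
    (S : Fin k → Finset (Fin d))
    (hS : ∀ r, (S r).Nonempty)
    (hcover : ∀ i : Fin d, ∃ r, i ∈ S r)
    (g : ℕ → Fin d → ℝ)
    (μ : ℕ → Fin k → ℝ) (ν : ℕ → Fin d → ℝ)
    (hμ : ∀ t r, μ t r = ∑ s ∈ Finset.Icc 1 t, (S r).sup' (hS r) (fun j => g s j ^ 2))
    (hν : ∀ t (i : Fin d), ν t i =
      (Finset.univ.filter (fun r => i ∈ S r)).inf'
        (by obtain ⟨r, hr⟩ := hcover i
            exact ⟨r, Finset.mem_filter.mpr ⟨Finset.mem_univ r, hr⟩⟩)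
        (fun r => μ t r))
    (w : ℕ → (Fin d → ℝ))
    (ℓ : ℕ → (Fin d → ℝ) → ℝ)
    (hconv : ∀ t ∈ Finset.Icc 1 T, ConvexOn ℝ Set.univ (ℓ t))
    (hsubgrad : ∀ t ∈ Finset.Icc 1 T, ∀ v : Fin d → ℝ,
      ℓ t (w t) + ∑ i : Fin d, g t i * (v i - w t i) ≤ ℓ t v)
    (η : ℝ) (hη : 0 < η)
    (hw1 : w 1 = 0)
    (hiter : ∀ t ∈ Finset.Icc 1 T, ∀ i : Fin d,
      w (t + 1) i = if 0 < ν t i then w t i - η * g t i / Real.sqrt (ν t i) else w t i)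
    (wstar : Fin d → ℝ) (D : ℝ) (hD : 0 ≤ D)
    (hbound : ∀ t ∈ Finset.Icc 1 T, ‖w t - wstar‖ ≤ D) :
    ∑ t ∈ Finset.Icc 1 T, (ℓ t (w t) - ℓ t wstar)
      ≤ (D ^ 2 / (2 * η) + η) * ∑ i : Fin d, Real.sqrt (ν T i) := by
  -- Step 1: regret is bounded by the sum of linearizations
  have hstep1 : ∑ t ∈ Finset.Icc 1 T, (ℓ t (w t) - ℓ t wstar)
      ≤ ∑ t ∈ Finset.Icc 1 T, ∑ i : Fin d, g t i * (w t i - wstar i) := by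
    apply Finset.sum_le_sum
    intro t ht
    have h := hsubgrad t ht wstar
    have h2 : ∑ i : Fin d, g t i * (w t i - wstar i)
        + ∑ i : Fin d, g t i * (wstar i - w t i) = 0 := by
      rw [← Finset.sum_add_distrib]
      exact Finset.sum_eq_zero (fun i _ => by ring)
    linarith
  refine hstep1.trans ?_
  rw [Finset.sum_comm, Finset.mul_sum]
  apply Finset.sum_le_sum
  intro i _
  -- basic facts about μ and ν
  have hμnn : ∀ t r, 0 ≤ μ t r := by
    intro t r
    rw [hμ]
    apply Finset.sum_nonneg
    intro s _
    obtain ⟨j, hj⟩ := hS r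
    exact le_trans (sq_nonneg (g s j)) (Finset.le_sup' (fun j => g s j ^ 2) hj)
  have hνnn : ∀ t, 0 ≤ ν t i := by
    intro t
    rw [hν]
    exact Finset.le_inf' _ _ (fun r _ => hμnn t r)
  have hμ0 : ∀ r, μ 0 r = 0 := by
    intro r
    rw [hμ]
    simp
  have hν0 : ν 0 i = 0 := by
    refine le_antisymm ?_ (hνnn 0)
    rw [hν]
    obtain ⟨r, hr⟩ := hcover i
    refine le_trans (Finset.inf'_le _ (Finset.mem_filter.mpr ⟨Finset.mem_univ r, hr⟩)) ?_
    rw [hμ0]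
  have hstep : ∀ t : ℕ, ν t i + g (t+1) i ^ 2 ≤ ν (t+1) i := by
    intro t
    have hne : (Finset.univ.filter (fun r => i ∈ S r)).Nonempty := by
      obtain ⟨r, hr⟩ := hcover i
      exact ⟨r, Finset.mem_filter.mpr ⟨Finset.mem_univ r, hr⟩⟩
    obtain ⟨r₀, hr₀mem, hr₀⟩ := Finset.exists_mem_eq_inf' hne (fun r => μ (t+1) r)
    have hiS : i ∈ S r₀ := (Finset.mem_filter.mp hr₀mem).2
    have h1 : ν (t+1) i = μ (t+1) r₀ := by rw [hν]; exact hr₀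
    have h2 : μ (t+1) r₀ = μ t r₀ + (S r₀).sup' (hS r₀) (fun j => g (t+1) j ^ 2) := by
      rw [hμ, hμ, Finset.sum_Icc_succ_top (by omega : 1 ≤ t+1)]
    have h3 : ν t i ≤ μ t r₀ := by rw [hν]; exact Finset.inf'_le _ hr₀mem
    have h4 : g (t+1) i ^ 2 ≤ (S r₀).sup' (hS r₀) (fun j => g (t+1) j ^ 2) :=
      Finset.le_sup' (fun j => g (t+1) j ^ 2) hiS
    linarith
  have hmono : ∀ t, ν t i ≤ ν (t+1) i := by
    intro t
    have := hstep t
    nlinarith [sq_nonneg (g (t+1) i)]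
  set a : ℕ → ℝ := fun t => Real.sqrt (ν t i) with ha
  have ha0 : a 0 = 0 := by simp [ha, hν0]
  have hann : ∀ t, 0 ≤ a t := fun t => Real.sqrt_nonneg _
  have hamono : ∀ t, a t ≤ a (t+1) := fun t => Real.sqrt_le_sqrt (hmono t)
  set x : ℕ → ℝ := fun t => w t i - wstar i with hx
  -- the per-step identity
  have heq : ∀ t ∈ Finset.Icc 1 T, g t i * x t
      = a t / (2*η) * (x t ^ 2 - x (t+1) ^ 2) + η/2 * (g t i ^ 2 / a t) := by
    intro t ht
    have hw := hiter t ht i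
    by_cases hpos : 0 < ν t i
    · rw [if_pos hpos] at hw
      have hs : 0 < a t := Real.sqrt_pos.mpr hpos
      have hx1 : x (t+1) = x t - η * g t i / a t := by
        simp only [hx, hw]; ring
      rw [hx1]
      field_simp
      ring
    · have hνt : ν t i = 0 := le_antisymm (not_lt.mp hpos) (hνnn t)
      obtain ⟨s, rfl⟩ : ∃ s, t = s + 1 := ⟨t - 1, by
        have := (Finset.mem_Icc.mp ht).1; omega⟩
      have hg : g (s+1) i = 0 := by
        have h1 := hstep s
        have h2 := hνnn s
        have : g (s+1) i ^ 2 ≤ 0 := by rw [hνt] at h1; linarith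
        nlinarith [sq_nonneg (g (s+1) i)]
      rw [if_neg hpos] at hw
      have hx1 : x (s+1+1) = x (s+1) := by simp [hx, hw]
      have hat : a (s+1) = 0 := by simp [ha, hνt]
      rw [hg, hx1, hat]
      ring_nf
  -- convert the sum to a range-indexed sum
  have hconv1 : ∑ t ∈ Finset.Icc 1 T, g t i * (w t i - wstar i)
      = ∑ s ∈ Finset.range T, g (s+1) i * x (s+1) := by
    rw [← Finset.Ico_add_one_right_eq_Icc, Finset.sum_Ico_eq_sum_range]
    exact Finset.sum_congr (by norm_num) (fun s _ => by rw [Nat.add_comm 1 s])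
  rw [hconv1]
  have hsum : ∑ s ∈ Finset.range T, g (s+1) i * x (s+1)
      = ∑ s ∈ Finset.range T, (a (s+1) / (2*η) * (x (s+1) ^ 2 - x (s+2) ^ 2)
          + η/2 * (g (s+1) i ^ 2 / a (s+1))) := by
    apply Finset.sum_congr rfl
    intro s hs
    have hmem : s + 1 ∈ Finset.Icc 1 T := by
      simp only [Finset.mem_range] at hs
      exact Finset.mem_Icc.mpr ⟨by omega, by omega⟩
    exact heq (s+1) hmem
  rw [hsum, Finset.sum_add_distrib]
  -- bound the first sum via telescoping
  have hxb : ∀ s ∈ Finset.range T, x (s+1) ^ 2 ≤ D ^ 2 := by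
    intro s hs
    have hmem : s + 1 ∈ Finset.Icc 1 T := by
      simp only [Finset.mem_range] at hs
      exact Finset.mem_Icc.mpr ⟨by omega, by omega⟩
    have h1 := hbound (s+1) hmem
    have h2 : |x (s+1)| ≤ D := by
      have := norm_le_pi_norm (w (s+1) - wstar) i
      simp only [Pi.sub_apply, Real.norm_eq_abs] at this
      exact le_trans this h1
    have := abs_le.mp h2
    nlinarith
  have hA : ∑ s ∈ Finset.range T, a (s+1) / (2*η) * (x (s+1) ^ 2 - x (s+2) ^ 2)
      ≤ D ^ 2 / (2*η) * a T := by
    have h1 : ∑ s ∈ Finset.range T, a (s+1) * (x (s+1)^2 - x (s+2)^2)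
        ≤ D ^ 2 * a T := by
      refine le_trans (tele_aux a x (D^2) ha0 hann hamono T hxb) ?_
      nlinarith [hann T, sq_nonneg (x (T+1))]
    have h2 : ∑ s ∈ Finset.range T, a (s+1) / (2*η) * (x (s+1) ^ 2 - x (s+2) ^ 2)
        = (1/(2*η)) * ∑ s ∈ Finset.range T, a (s+1) * (x (s+1)^2 - x (s+2)^2) := by
      rw [Finset.mul_sum]
      exact Finset.sum_congr rfl (fun s _ => by ring)
    rw [h2]
    have h3 : (1/(2*η)) * (D^2 * a T) = D^2/(2*η) * a T := by ring
    rw [← h3]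
    exact mul_le_mul_of_nonneg_left h1 (by positivity)
  -- bound the second sum
  have hB : ∑ s ∈ Finset.range T, η/2 * (g (s+1) i ^ 2 / a (s+1)) ≤ η * a T := by
    have hterm : ∀ s, g (s+1) i ^ 2 / a (s+1) ≤ 2 * (a (s+1) - a s) := by
      intro s
      by_cases hpos : 0 < ν (s+1) i
      · have hs1 : 0 < a (s+1) := Real.sqrt_pos.mpr hpos
        have hsq1 : a (s+1) ^ 2 = ν (s+1) i := Real.sq_sqrt hpos.le
        have hsq0 : a s ^ 2 = ν s i := Real.sq_sqrt (hνnn s)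
        have hg2 : g (s+1) i ^ 2 ≤ a (s+1) ^ 2 - a s ^ 2 := by
          rw [hsq1, hsq0]; linarith [hstep s]
        rw [div_le_iff₀ hs1]
        nlinarith [sq_nonneg (a (s+1) - a s), hann s]
      · have hν1 : ν (s+1) i = 0 := le_antisymm (not_lt.mp hpos) (hνnn (s+1))
        have hν2 : ν s i = 0 := le_antisymm (by linarith [hmono s, hν1.le]) (hνnn s)
        have hg : g (s+1) i ^ 2 ≤ 0 := by
          have := hstep s; rw [hν1, hν2] at this; linarith
        have hg0 : g (s+1) i = 0 := by nlinarith [sq_nonneg (g (s+1) i)]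
        simp [hg0, ha, hν1, hν2]
    calc ∑ s ∈ Finset.range T, η/2 * (g (s+1) i ^ 2 / a (s+1))
        ≤ ∑ s ∈ Finset.range T, η/2 * (2 * (a (s+1) - a s)) := by
          apply Finset.sum_le_sum
          intro s _
          exact mul_le_mul_of_nonneg_left (hterm s) (by linarith)
      _ = η * ∑ s ∈ Finset.range T, (a (s+1) - a s) := by
          rw [Finset.mul_sum]
          exact Finset.sum_congr rfl (fun s _ => by ring)
      _ = η * (a T - a 0) := by rw [Finset.sum_range_sub]
      _ = η * a T := by rw [ha0]; ring
  have := add_le_add hA hB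
  calc _ ≤ D ^ 2 / (2*η) * a T + η * a T := add_le_add hA hB
    _ = (D ^ 2 / (2 * η) + η) * a T := by ring
end

section
/- (Main regret bound for SM3.) Assume the loss functions ℓ_1,…,ℓ_T are convex and let w_1,…,w_T be the iterates generated by SM3-I with learning rate η = D. Then for any w* ∈ ℝ^d with ‖w_t − w*‖_∞ ≤ D for all t, the regret satisfies ∑_{t=1}^T (ℓ_t(w_t) − ℓ_t(w*)) ≤ 2D ∑_{i=1}^d √( min_{r : i∈S_r} ∑_{t=1}^T max_{j∈S_r} g_t(j)² ). -/
open Finset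

set_option maxHeartbeats 1000000

lemma sm3_coord (T : ℕ) (D : ℝ) (hD : 0 < D) (x γ V : ℕ → ℝ) (y : ℝ)
    (hV0 : V 0 = 0)
    (hVstep : ∀ t, 1 ≤ t → t ≤ T → V (t-1) + γ t ^ 2 ≤ V t)
    (hx : ∀ t, 1 ≤ t → t ≤ T →
      x (t+1) = if 0 < V t then x t - D * γ t / Real.sqrt (V t) else x t)
    (hbd : ∀ t, 1 ≤ t → t ≤ T → |x t - y| ≤ D) :
    ∑ t ∈ Finset.Icc 1 T, γ t * (x t - y) ≤ 2 * D * Real.sqrt (V T) := by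
  have Vnn : ∀ t, t ≤ T → 0 ≤ V t := by
    intro t
    induction t with
    | zero => intro _; simp [hV0]
    | succ m ih =>
      intro h
      have h1 := hVstep (m+1) (by omega) h
      have h2 := ih (by omega)
      simp only [Nat.add_sub_cancel] at h1
      nlinarith [sq_nonneg (γ (m+1))]
  have key : ∀ n, n ≤ T →
      2 * D * (∑ t ∈ Finset.Icc 1 n, γ t * (x t - y))
        + Real.sqrt (V n) * (x (n+1) - y)^2 ≤ 3 * D^2 * Real.sqrt (V n) := by
    intro n
    induction n with
    | zero => intro _; simp [hV0]
    | succ m ih =>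
      intro hm
      have hm' : m ≤ T := by omega
      have IH := ih hm'
      have hstep := hVstep (m+1) (by omega) hm
      simp only [Nat.add_sub_cancel] at hstep
      have ham : 0 ≤ V m := Vnn m hm'
      have hab : V m ≤ V (m+1) := by nlinarith [sq_nonneg (γ (m+1))]
      have hsum : ∑ t ∈ Finset.Icc 1 (m+1), γ t * (x t - y)
          = (∑ t ∈ Finset.Icc 1 m, γ t * (x t - y)) + γ (m+1) * (x (m+1) - y) :=
        Finset.sum_Icc_succ_top (by omega) _
      set sa := Real.sqrt (V m) with hsa
      set sb := Real.sqrt (V (m+1)) with hsb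
      have hsa0 : 0 ≤ sa := Real.sqrt_nonneg _
      have hsab : sa ≤ sb := Real.sqrt_le_sqrt hab
      have hsa2 : sa^2 = V m := Real.sq_sqrt ham
      have hsb2 : sb^2 = V (m+1) := Real.sq_sqrt (le_trans ham hab)
      have hu : |x (m+1) - y| ≤ D := hbd (m+1) (by omega) hm
      have hu2 : (x (m+1) - y)^2 ≤ D^2 := by
        nlinarith [abs_nonneg (x (m+1) - y), sq_abs (x (m+1) - y)]
      by_cases hpos : 0 < V (m+1)
      · have hsbpos : 0 < sb := Real.sqrt_pos.mpr hpos
        have hxs : x (m+1+1) = x (m+1) - D * γ (m+1) / sb := by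
          rw [hx (m+1) (by omega) hm, if_pos hpos]
        have hexp : sb * (x (m+1+1) - y)^2
            = sb * (x (m+1) - y)^2 - 2 * D * (γ (m+1) * (x (m+1) - y))
              + D^2 * γ (m+1)^2 / sb := by
          rw [hxs]; field_simp; ring
        have f1 : D^2 * γ (m+1)^2 / sb ≤ 2 * D^2 * (sb - sa) := by
          rw [div_le_iff₀ hsbpos]
          nlinarith [sq_nonneg (sb - sa), sq_nonneg D,
            mul_le_mul_of_nonneg_left hstep (sq_nonneg D)]
        have f2 : (sb - sa) * (x (m+1) - y)^2 ≤ (sb - sa) * D^2 :=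
          mul_le_mul_of_nonneg_left hu2 (by linarith)
        rw [hsum, mul_add, hexp]
        linarith [IH, f1, f2]
      · have hb0 : V (m+1) = 0 := le_antisymm (by linarith [Vnn (m+1) hm, not_lt.mp hpos]) (Vnn (m+1) hm)
        have hg0 : γ (m+1) = 0 := by
          have : γ (m+1)^2 ≤ 0 := by linarith
          nlinarith [sq_nonneg (γ (m+1))]
        have ha0 : V m = 0 := by nlinarith [sq_nonneg (γ (m+1))]
        have hxs : x (m+1+1) = x (m+1) := by rw [hx (m+1) (by omega) hm, if_neg hpos]
        have hsb0 : sb = 0 := by rw [hsb, hb0, Real.sqrt_zero]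
        have hsa00 : sa = 0 := by rw [hsa, ha0, Real.sqrt_zero]
        rw [hsum, hg0, hsb0]
        rw [hsa00] at IH
        simp only [zero_mul, mul_zero, add_zero] at IH ⊢
        linarith
  have hk := key T le_rfl
  nlinarith [hk, mul_nonneg (Real.sqrt_nonneg (V T)) (sq_nonneg (x (T+1) - y)), hD,
    Real.sqrt_nonneg (V T)]


/-- Main regret bound for SM3: for convex losses, the iterates of SM3-I
with learning rate `η = D` satisfy, for any `w*` with `‖w t − w*‖_∞ ≤ D` for all `t`,
`∑_{t=1}^T (ℓ t (w t) − ℓ t w*) ≤ 2D ∑_i √(min_{r : i ∈ S r} ∑_{t=1}^T max_{j ∈ S r} g t j ^ 2)`. -/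
theorem sm3_I_main_regret_bound
    (d k T : ℕ) (hd : 0 < d) (hk : 0 < k) (hT : 0 < T)
    (S : Fin k → Finset (Fin d))
    (hS : ∀ r, (S r).Nonempty)
    (hcover : ∀ i : Fin d, ∃ r, i ∈ S r)
    (g : ℕ → Fin d → ℝ)
    (μ : ℕ → Fin k → ℝ) (ν : ℕ → Fin d → ℝ)
    (hμ : ∀ t r, μ t r = ∑ s ∈ Finset.Icc 1 t, (S r).sup' (hS r) (fun j => g s j ^ 2))
    (hν : ∀ t (i : Fin d), ν t i =
      (Finset.univ.filter (fun r => i ∈ S r)).inf'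
        (by obtain ⟨r, hr⟩ := hcover i
            exact ⟨r, Finset.mem_filter.mpr ⟨Finset.mem_univ r, hr⟩⟩)
        (fun r => μ t r))
    (w : ℕ → (Fin d → ℝ))
    (ℓ : ℕ → (Fin d → ℝ) → ℝ)
    (hconv : ∀ t ∈ Finset.Icc 1 T, ConvexOn ℝ Set.univ (ℓ t))
    (hsubgrad : ∀ t ∈ Finset.Icc 1 T, ∀ v : Fin d → ℝ,
      ℓ t (w t) + ∑ i : Fin d, g t i * (v i - w t i) ≤ ℓ t v)
    (wstar : Fin d → ℝ) (D : ℝ) (hD : 0 < D)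
    (hbound : ∀ t ∈ Finset.Icc 1 T, ‖w t - wstar‖ ≤ D)
    (hw1 : w 1 = 0)
    (hiter : ∀ t ∈ Finset.Icc 1 T, ∀ i : Fin d,
      w (t + 1) i = if 0 < ν t i then w t i - D * g t i / Real.sqrt (ν t i) else w t i) :
    ∑ t ∈ Finset.Icc 1 T, (ℓ t (w t) - ℓ t wstar)
      ≤ 2 * D * ∑ i : Fin d,
          Real.sqrt ((Finset.univ.filter (fun r => i ∈ S r)).inf'
            (by obtain ⟨r, hr⟩ := hcover i
                exact ⟨r, Finset.mem_filter.mpr ⟨Finset.mem_univ r, hr⟩⟩)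
            (fun r => ∑ t ∈ Finset.Icc 1 T, (S r).sup' (hS r) (fun j => g t j ^ 2))) := by
  have coordbound : ∀ i : Fin d,
      ∑ t ∈ Finset.Icc 1 T, g t i * (w t i - wstar i) ≤ 2 * D * Real.sqrt (ν T i) := by
    intro i
    apply sm3_coord T D hD (fun t => w t i) (fun t => g t i) (fun t => ν t i) (wstar i)
    · rw [hν 0 i]
      have : ∀ r, μ 0 r = 0 := by intro r; simp [hμ]
      simp [this]
    · intro t h1 h2
      obtain ⟨m, rfl⟩ : ∃ m, t = m + 1 := ⟨t - 1, by omega⟩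
      simp only [Nat.add_sub_cancel]
      rw [hν (m+1) i]
      apply Finset.le_inf'
      intro r hr
      have hir : i ∈ S r := (Finset.mem_filter.mp hr).2
      have h3 : ν m i ≤ μ m r := by rw [hν m i]; exact Finset.inf'_le _ hr
      have h4 : μ (m+1) r = μ m r + (S r).sup' (hS r) (fun j => g (m+1) j ^ 2) := by
        rw [hμ, hμ]; exact Finset.sum_Icc_succ_top (by omega) _
      have h5 : g (m+1) i ^ 2 ≤ (S r).sup' (hS r) (fun j => g (m+1) j ^ 2) :=
        Finset.le_sup' (fun j => g (m+1) j ^ 2) hir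
      linarith
    · intro t h1 h2
      exact hiter t (Finset.mem_Icc.mpr ⟨h1, h2⟩) i
    · intro t h1 h2
      have hb := hbound t (Finset.mem_Icc.mpr ⟨h1, h2⟩)
      calc |w t i - wstar i| = ‖(w t - wstar) i‖ := by simp [Real.norm_eq_abs]
        _ ≤ ‖w t - wstar‖ := norm_le_pi_norm _ i
        _ ≤ D := hb
  calc ∑ t ∈ Finset.Icc 1 T, (ℓ t (w t) - ℓ t wstar)
      ≤ ∑ t ∈ Finset.Icc 1 T, ∑ i : Fin d, g t i * (w t i - wstar i) := by
        apply Finset.sum_le_sum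
        intro t ht
        have h := hsubgrad t ht wstar
        have heq : ∑ i : Fin d, g t i * (w t i - wstar i)
            = -∑ i : Fin d, g t i * (wstar i - w t i) := by
          rw [← Finset.sum_neg_distrib]
          exact Finset.sum_congr rfl fun i _ => by ring
        rw [heq]; linarith
    _ = ∑ i : Fin d, ∑ t ∈ Finset.Icc 1 T, g t i * (w t i - wstar i) := Finset.sum_comm
    _ ≤ ∑ i : Fin d, 2 * D * Real.sqrt (ν T i) :=
        Finset.sum_le_sum fun i _ => coordbound i
    _ = 2 * D * ∑ i : Fin d, Real.sqrt (ν T i) := by rw [Finset.mul_sum]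
    _ = _ := by
        congr 1
        apply Finset.sum_congr rfl
        intro i _
        congr 1
        rw [hν T i]
        exact Finset.inf'_congr _ rfl fun r _ => hμ T r
end

section
/- For every t ∈ {1,…,T−1} and every coordinate i ∈ {1,…,d}, the SM3-II accumulator satisfies ν'_{t+1}(i) ≥ ν'_t(i) + g_{t+1}(i)²; in particular, for each i the sequence ν'_1(i), ν'_2(i), …, ν'_T(i) is monotonically increasing. -/
open Finset

/-- For every `t ∈ {1,…,T−1}` and coordinate `i`, the SM3-II accumulator
satisfies `ν' (t+1) i ≥ ν' t i + g (t+1) i ^ 2`; in particular, for each `i` the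
sequence `ν' 1 i, …, ν' T i` is monotonically increasing. -/
theorem sm3_II_nu_monotone
    (d k T : ℕ) (hd : 0 < d) (hk : 0 < k) (hT : 0 < T)
    (S : Fin k → Finset (Fin d))
    (hS : ∀ r, (S r).Nonempty)
    (hcover : ∀ i : Fin d, ∃ r, i ∈ S r)
    (g : ℕ → Fin d → ℝ)
    (μ' : ℕ → Fin k → ℝ) (ν' : ℕ → Fin d → ℝ)
    (hμ'0 : ∀ r, μ' 0 r = 0)
    (hν' : ∀ t, 1 ≤ t → ∀ i : Fin d, ν' t i =
      (Finset.univ.filter (fun r => i ∈ S r)).inf'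
        (by obtain ⟨r, hr⟩ := hcover i
            exact ⟨r, Finset.mem_filter.mpr ⟨Finset.mem_univ r, hr⟩⟩)
        (fun r => μ' (t - 1) r) + g t i ^ 2)
    (hμ' : ∀ t, 1 ≤ t → ∀ r, μ' t r = (S r).sup' (hS r) (fun j => ν' t j)) :
    (∀ t, 1 ≤ t → t + 1 ≤ T → ∀ i : Fin d,
        ν' t i + g (t + 1) i ^ 2 ≤ ν' (t + 1) i) ∧
    (∀ t, 1 ≤ t → t + 1 ≤ T → ∀ i : Fin d, ν' t i ≤ ν' (t + 1) i) := by
  have key : ∀ t, 1 ≤ t → ∀ i : Fin d,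
      ν' t i + g (t + 1) i ^ 2 ≤ ν' (t + 1) i := by
    intro t ht i
    rw [hν' (t + 1) (by omega) i]
    simp only [Nat.add_sub_cancel]
    have : ν' t i ≤ (Finset.univ.filter (fun r => i ∈ S r)).inf'
        (by obtain ⟨r, hr⟩ := hcover i
            exact ⟨r, Finset.mem_filter.mpr ⟨Finset.mem_univ r, hr⟩⟩)
        (fun r => μ' t r) := by
      apply Finset.le_inf'
      intro r hr
      rw [hμ' t ht r]
      exact Finset.le_sup' _ (Finset.mem_filter.mp hr).2
    linarith
  refine ⟨fun t ht _ i => key t ht i, fun t ht _ i => ?_⟩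
  have := key t ht i
  nlinarith [sq_nonneg (g (t + 1) i)]
end

section
/- Fixing a sequence of gradients g_1,…,g_T, for every t ∈ {1,…,T} and every coordinate i ∈ {1,…,d} the SM3-II accumulator is sandwiched between the Adagrad and SM3-I accumulators: ∑_{s=1}^t g_s(i)² ≤ ν'_t(i) ≤ ν_t(i). -/
/-!
Induct on `t` with two block-level invariants of SM3-II: `μ'_t(r)` dominates the Adagrad sum of
every coordinate of `S_r`, and `μ'_t(r) ≤ μ_t(r)`. Both pass through one step of the recursion
because `ν'_{t+1}(i)` adds `g_{t+1}(i)²` to a minimum over blocks containing `i`, which is at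
least the Adagrad sum up to `t` and at most `μ_t(r) + max_{j ∈ S_r} g_{t+1}(j)²` for any such `r`.
-/

open Finset

section SM3

variable {ι κ : Type*} [DecidableEq ι] [Fintype κ] {S : κ → Finset ι} {g : ℕ → ι → ℝ}
  {μ μ' : ℕ → κ → ℝ} {ν' : ℕ → ι → ℝ}

theorem nonempty_filter_mem_of_cover (hcover : ∀ i, ∃ r, i ∈ S r) (i : ι) :
    (univ.filter (fun r => i ∈ S r)).Nonempty :=
  filter_nonempty_iff.mpr <| (hcover i).imp fun _ hr => ⟨mem_univ _, hr⟩

theorem sum_sq_le_sm3II_nu_succ (hcover : ∀ i, ∃ r, i ∈ S r)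
    (hν' : ∀ t, 1 ≤ t → ∀ i, ν' t i =
      (univ.filter (fun r => i ∈ S r)).inf' (nonempty_filter_mem_of_cover hcover i)
        (μ' (t - 1)) + g t i ^ 2)
    {t : ℕ} (hlow : ∀ r, ∀ i ∈ S r, ∑ s ∈ Icc 1 t, g s i ^ 2 ≤ μ' t r) (i : ι) :
    ∑ s ∈ Icc 1 (t + 1), g s i ^ 2 ≤ ν' (t + 1) i := by
  rw [sum_Icc_succ_top (by omega), hν' (t + 1) (by omega), Nat.add_sub_cancel]
  gcongr
  exact le_inf' _ _ fun r hr => hlow r i (mem_filter.mp hr).2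

theorem sm3II_nu_succ_le_sm3I_mu_succ (hS : ∀ r, (S r).Nonempty) (hcover : ∀ i, ∃ r, i ∈ S r)
    (hμ : ∀ t r, μ t r = ∑ s ∈ Icc 1 t, (S r).sup' (hS r) (fun j => g s j ^ 2))
    (hν' : ∀ t, 1 ≤ t → ∀ i, ν' t i =
      (univ.filter (fun r => i ∈ S r)).inf' (nonempty_filter_mem_of_cover hcover i)
        (μ' (t - 1)) + g t i ^ 2)
    {t : ℕ} (hup : ∀ r, μ' t r ≤ μ t r) {i : ι} {r : κ} (hir : i ∈ S r) :
    ν' (t + 1) i ≤ μ (t + 1) r := by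
  rw [hν' (t + 1) (by omega), Nat.add_sub_cancel, hμ, sum_Icc_succ_top (by omega), ← hμ]
  gcongr
  · exact (inf'_le _ (mem_filter.mpr ⟨mem_univ r, hir⟩)).trans (hup r)
  · exact le_sup' (fun j => g (t + 1) j ^ 2) hir

theorem sum_sq_le_sm3II_mu (hS : ∀ r, (S r).Nonempty) (hcover : ∀ i, ∃ r, i ∈ S r)
    (hμ'0 : ∀ r, μ' 0 r = 0)
    (hν' : ∀ t, 1 ≤ t → ∀ i, ν' t i =
      (univ.filter (fun r => i ∈ S r)).inf' (nonempty_filter_mem_of_cover hcover i)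
        (μ' (t - 1)) + g t i ^ 2)
    (hμ' : ∀ t, 1 ≤ t → ∀ r, μ' t r = (S r).sup' (hS r) (ν' t)) :
    ∀ t r, ∀ i ∈ S r, ∑ s ∈ Icc 1 t, g s i ^ 2 ≤ μ' t r
  | 0, r, _, _ => by simp [hμ'0]
  | t + 1, r, i, hir => by
    rw [hμ' (t + 1) (by omega)]
    exact (sum_sq_le_sm3II_nu_succ hcover hν'
      (sum_sq_le_sm3II_mu hS hcover hμ'0 hν' hμ' t) i).trans (le_sup' _ hir)

theorem sm3II_mu_le_sm3I_mu (hS : ∀ r, (S r).Nonempty) (hcover : ∀ i, ∃ r, i ∈ S r)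
    (hμ : ∀ t r, μ t r = ∑ s ∈ Icc 1 t, (S r).sup' (hS r) (fun j => g s j ^ 2))
    (hμ'0 : ∀ r, μ' 0 r = 0)
    (hν' : ∀ t, 1 ≤ t → ∀ i, ν' t i =
      (univ.filter (fun r => i ∈ S r)).inf' (nonempty_filter_mem_of_cover hcover i)
        (μ' (t - 1)) + g t i ^ 2)
    (hμ' : ∀ t, 1 ≤ t → ∀ r, μ' t r = (S r).sup' (hS r) (ν' t)) :
    ∀ t r, μ' t r ≤ μ t r
  | 0, r => by simp [hμ'0, hμ]
  | t + 1, r => by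
    rw [hμ' (t + 1) (by omega)]
    exact sup'_le _ _ fun _ hjr => sm3II_nu_succ_le_sm3I_mu_succ hS hcover hμ hν'
      (sm3II_mu_le_sm3I_mu hS hcover hμ hμ'0 hν' hμ' t) hjr

end SM3

/-- Fixing a sequence of gradients `g 1, …, g T`, for every `t ∈ {1,…,T}`
and coordinate `i`, the SM3-II accumulator is sandwiched between the Adagrad and SM3-I
accumulators: `∑_{s=1}^t g s i ^ 2 ≤ ν' t i ≤ ν t i`. -/
theorem sm3_II_sandwich
    (d k T : ℕ)
    (S : Fin k → Finset (Fin d))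
    (hS : ∀ r, (S r).Nonempty)
    (hcover : ∀ i : Fin d, ∃ r, i ∈ S r)
    (g : ℕ → Fin d → ℝ)
    (μ : ℕ → Fin k → ℝ) (ν : ℕ → Fin d → ℝ)
    (hμ : ∀ t r, μ t r = ∑ s ∈ Finset.Icc 1 t, (S r).sup' (hS r) (fun j => g s j ^ 2))
    (hν : ∀ t (i : Fin d), ν t i =
      (Finset.univ.filter (fun r => i ∈ S r)).inf'
        (by obtain ⟨r, hr⟩ := hcover i
            exact ⟨r, Finset.mem_filter.mpr ⟨Finset.mem_univ r, hr⟩⟩)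
        (fun r => μ t r))
    (μ' : ℕ → Fin k → ℝ) (ν' : ℕ → Fin d → ℝ)
    (hμ'0 : ∀ r, μ' 0 r = 0)
    (hν' : ∀ t, 1 ≤ t → ∀ i : Fin d, ν' t i =
      (Finset.univ.filter (fun r => i ∈ S r)).inf'
        (by obtain ⟨r, hr⟩ := hcover i
            exact ⟨r, Finset.mem_filter.mpr ⟨Finset.mem_univ r, hr⟩⟩)
        (fun r => μ' (t - 1) r) + g t i ^ 2)
    (hμ' : ∀ t, 1 ≤ t → ∀ r, μ' t r = (S r).sup' (hS r) (fun j => ν' t j)) :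
    ∀ t ∈ Finset.Icc 1 T, ∀ i : Fin d,
      (∑ s ∈ Finset.Icc 1 t, g s i ^ 2) ≤ ν' t i ∧ ν' t i ≤ ν t i := by
  intro t ht i
  obtain ⟨n, rfl⟩ : ∃ n, t = n + 1 := Nat.exists_eq_add_of_le' (mem_Icc.mp ht).1
  refine ⟨sum_sq_le_sm3II_nu_succ hcover hν' (sum_sq_le_sm3II_mu hS hcover hμ'0 hν' hμ' n) i, ?_⟩
  rw [hν]
  exact le_inf' _ _ fun r hr => sm3II_nu_succ_le_sm3I_mu_succ hS hcover hμ hν'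
    (sm3II_mu_le_sm3I_mu hS hcover hμ hμ'0 hν' hμ' n) (mem_filter.mp hr).2
end

section
/- (Regret bound for SM3-II.) Assume the loss functions ℓ_1,…,ℓ_T are convex and let w_1,…,w_T be the iterates generated by SM3-II with learning rate η > 0. Then for any w* ∈ ℝ^d with ‖w_t − w*‖_∞ ≤ D for all t, the regret satisfies ∑_{t=1}^T (ℓ_t(w_t) − ℓ_t(w*)) ≤ (D²/(2η) + η) · ∑_{i=1}^d √(ν'_T(i)). -/
open Finset

/-!
The subgradient inequality bounds the regret by the linear regret `∑ₜ ⟪gₜ, wₜ - w*⟫`, which splits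
into one sum per coordinate. Since every `μ'ₜ(r)` with `i ∈ S r` is a maximum over a set containing
`i`, the cover gives `ν'ₜ(i) + gₜ₊₁(i)² ≤ ν'ₜ₊₁(i)`, so each coordinate performs one-dimensional
gradient steps with step sizes `η / √aₜ` for an accumulator `aₜ` that grows at least by `gₜ²`.
For such steps, expanding `(xₜ₊₁ - y)²` gives
`gₜ (xₜ - y) = √aₜ ((xₜ - y)² - (xₜ₊₁ - y)²) / (2η) + η gₜ² / (2√aₜ)`;
summation by parts bounds the first part by `D² √a_T / (2η)`, and
`gₜ² / √aₜ ≤ 2 (√aₜ - √aₜ₋₁)` telescopes to `2 √a_T`.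
-/

theorem sum_Icc_mul_sub_succ_le (s b : ℕ → ℝ) (B : ℝ) (T : ℕ) (hs : Monotone s) (hs0 : s 0 = 0)
    (hb : ∀ t ∈ Icc 1 T, b t ≤ B) :
    ∑ t ∈ Icc 1 T, s t * (b t - b (t + 1)) ≤ B * s T - s T * b (T + 1) := by
  induction T with
  | zero => simp [hs0]
  | succ T ih =>
    rw [sum_Icc_succ_top (by omega)]
    have hbT : b (T + 1) ≤ B := hb (T + 1) (by simp)
    have hsT : s T ≤ s (T + 1) := hs T.le_succ
    have := ih fun t ht => hb t (Icc_subset_Icc_right T.le_succ ht)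
    nlinarith

theorem sq_div_sqrt_le_two_mul_sqrt_sub {a a' c : ℝ} (ha' : 0 ≤ a') (h : a' + c ^ 2 ≤ a) :
    c ^ 2 / √a ≤ 2 * (√a - √a') := by
  have hsqrt : √a' ≤ √a := Real.sqrt_le_sqrt (by nlinarith [sq_nonneg c])
  rcases (Real.sqrt_nonneg a).eq_or_lt with ha | ha
  · rw [← ha, div_zero]
    linarith
  · rw [div_le_iff₀ ha]
    have := Real.sq_sqrt ha'
    have := Real.sq_sqrt (ha'.trans (by nlinarith [sq_nonneg c]) : 0 ≤ a)
    nlinarith [Real.sqrt_nonneg a']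

section AdaGrad

variable {a g : ℕ → ℝ}

theorem monotone_of_add_sq_le (ha : ∀ t, a t + g (t + 1) ^ 2 ≤ a (t + 1)) : Monotone a :=
  monotone_nat_of_le_succ fun t => by nlinarith [ha t, sq_nonneg (g (t + 1))]

theorem sum_Icc_sq_div_sqrt_le (ha0 : a 0 = 0) (ha : ∀ t, a t + g (t + 1) ^ 2 ≤ a (t + 1))
    (T : ℕ) : ∑ t ∈ Icc 1 T, g t ^ 2 / √(a t) ≤ 2 * √(a T) := by
  induction T with
  | zero => simp [ha0]
  | succ T ih =>
    rw [sum_Icc_succ_top (by omega)]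
    have := sq_div_sqrt_le_two_mul_sqrt_sub (ha0 ▸ monotone_of_add_sq_le ha T.zero_le) (ha T)
    linarith

theorem mul_sub_eq_of_gradient_step {η s c x x' y : ℝ} (hη : η ≠ 0) (hs : s = 0 → c = 0)
    (hx' : x' = x - η * c / s) :
    c * (x - y) = s * ((x - y) ^ 2 - (x' - y) ^ 2) / (2 * η) + η / 2 * (c ^ 2 / s) := by
  subst hx'
  rcases eq_or_ne s 0 with rfl | hs0
  · simp [hs rfl]
  · field_simp
    ring

theorem sum_Icc_mul_sub_le_of_adagrad {η D y : ℝ} {x : ℕ → ℝ} {T : ℕ} (hη : 0 < η)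
    (ha0 : a 0 = 0) (ha : ∀ t, a t + g (t + 1) ^ 2 ≤ a (t + 1))
    (hx : ∀ t ∈ Icc 1 T, x (t + 1) = if 0 < a t then x t - η * g t / √(a t) else x t)
    (hxy : ∀ t ∈ Icc 1 T, |x t - y| ≤ D) :
    ∑ t ∈ Icc 1 T, g t * (x t - y) ≤ (D ^ 2 / (2 * η) + η) * √(a T) := by
  set s : ℕ → ℝ := fun t => √(a t)
  set b : ℕ → ℝ := fun t => (x t - y) ^ 2
  have hmono := monotone_of_add_sq_le ha
  have hstep : ∀ t ∈ Icc 1 T, g t * (x t - y) =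
      s t * (b t - b (t + 1)) / (2 * η) + η / 2 * (g t ^ 2 / s t) := by
    intro t ht
    obtain ⟨n, rfl⟩ : ∃ n, t = n + 1 := ⟨t - 1, by grind⟩
    have hg : s (n + 1) = 0 → g (n + 1) = 0 := fun h0 => by
      have : a (n + 1) ≤ 0 := Real.sqrt_eq_zero'.mp h0
      nlinarith [ha n, ha0 ▸ hmono n.zero_le, sq_nonneg (g (n + 1))]
    refine mul_sub_eq_of_gradient_step hη.ne' hg ?_
    rw [hx _ ht]
    split_ifs with hpos
    · rfl
    · simp [hg (Real.sqrt_eq_zero'.mpr (not_lt.mp hpos))]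
  have hsq : ∀ t ∈ Icc 1 T, b t ≤ D ^ 2 := fun t ht =>
    sq_le_sq' (abs_le.mp (hxy t ht)).1 (abs_le.mp (hxy t ht)).2
  have hAbel := sum_Icc_mul_sub_succ_le s b (D ^ 2) T (fun _ _ h => Real.sqrt_le_sqrt (hmono h))
    (by simp [s, ha0]) hsq
  have hsum := sum_Icc_sq_div_sqrt_le ha0 ha T
  calc ∑ t ∈ Icc 1 T, g t * (x t - y)
      = (∑ t ∈ Icc 1 T, s t * (b t - b (t + 1))) / (2 * η)
          + η / 2 * ∑ t ∈ Icc 1 T, g t ^ 2 / s t := by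
        rw [sum_congr rfl hstep, sum_add_distrib, sum_div, mul_sum]
    _ ≤ D ^ 2 * s T / (2 * η) + η / 2 * (2 * s T) := by
        gcongr
        nlinarith [mul_nonneg (Real.sqrt_nonneg (a T)) (sq_nonneg (x (T + 1) - y))]
    _ = (D ^ 2 / (2 * η) + η) * √(a T) := by
        field_simp
        ring

end AdaGrad

theorem sm3_accumulator_add_sq_le {ι κ : Type*} [Fintype κ] [DecidableEq ι]
    (S : κ → Finset ι) (hS : ∀ r, (S r).Nonempty)
    (hcover : ∀ i, (univ.filter fun r => i ∈ S r).Nonempty)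
    (g : ℕ → ι → ℝ) (μ' : ℕ → κ → ℝ) (ν' : ℕ → ι → ℝ) (hμ'0 : ∀ r, 0 ≤ μ' 0 r)
    (hν' : ∀ t, 1 ≤ t → ∀ i, ν' t i =
      (univ.filter fun r => i ∈ S r).inf' (hcover i) (fun r => μ' (t - 1) r) + g t i ^ 2)
    (hμ' : ∀ t, 1 ≤ t → ∀ r, μ' t r = (S r).sup' (hS r) (fun j => ν' t j)) (i : ι) (t : ℕ) :
    (if t = 0 then 0 else ν' t i) + g (t + 1) i ^ 2 ≤ ν' (t + 1) i := by
  rw [hν' (t + 1) (by omega), Nat.add_sub_cancel, add_le_add_iff_right]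
  split_ifs with ht
  · subst ht
    exact le_inf' _ _ fun r _ => hμ'0 r
  · simp only [hμ' t (by omega)]
    exact le_inf' _ _ fun r hr => le_sup' (ν' t) (mem_filter.mp hr).2

/-- Regret bound for SM3-II: for convex losses, the iterates of SM3-II
with learning rate `η > 0` satisfy, for any `w*` with `‖w t − w*‖_∞ ≤ D` for all `t`,
`∑_{t=1}^T (ℓ t (w t) − ℓ t w*) ≤ (D²/(2η) + η) ∑ i √(ν' T i)`. -/
theorem sm3_II_regret_bound
    (d k T : ℕ)
    (S : Fin k → Finset (Fin d))
    (hS : ∀ r, (S r).Nonempty)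
    (hcover : ∀ i : Fin d, ∃ r, i ∈ S r)
    (g : ℕ → Fin d → ℝ)
    (μ' : ℕ → Fin k → ℝ) (ν' : ℕ → Fin d → ℝ)
    (hμ'0 : ∀ r, μ' 0 r = 0)
    (hν' : ∀ t, 1 ≤ t → ∀ i : Fin d, ν' t i =
      (Finset.univ.filter (fun r => i ∈ S r)).inf'
        (by obtain ⟨r, hr⟩ := hcover i
            exact ⟨r, Finset.mem_filter.mpr ⟨Finset.mem_univ r, hr⟩⟩)
        (fun r => μ' (t - 1) r) + g t i ^ 2)
    (hμ' : ∀ t, 1 ≤ t → ∀ r, μ' t r = (S r).sup' (hS r) (fun j => ν' t j))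
    (w : ℕ → (Fin d → ℝ))
    (ℓ : ℕ → (Fin d → ℝ) → ℝ)
    (hsubgrad : ∀ t ∈ Finset.Icc 1 T, ∀ v : Fin d → ℝ,
      ℓ t (w t) + ∑ i : Fin d, g t i * (v i - w t i) ≤ ℓ t v)
    (η : ℝ) (hη : 0 < η)
    (hiter : ∀ t ∈ Finset.Icc 1 T, ∀ i : Fin d,
      w (t + 1) i = if 0 < ν' t i then w t i - η * g t i / Real.sqrt (ν' t i) else w t i)
    (wstar : Fin d → ℝ) (D : ℝ)
    (hbound : ∀ t ∈ Finset.Icc 1 T, ‖w t - wstar‖ ≤ D) :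
    ∑ t ∈ Finset.Icc 1 T, (ℓ t (w t) - ℓ t wstar)
      ≤ (D ^ 2 / (2 * η) + η) * ∑ i : Fin d, Real.sqrt (ν' T i) := by
  have hlinear : ∀ t ∈ Icc 1 T, ℓ t (w t) - ℓ t wstar ≤ ∑ i, g t i * (w t i - wstar i) := by
    intro t ht
    have := hsubgrad t ht wstar
    simp only [mul_sub, sum_sub_distrib] at this ⊢
    linarith
  have hcoord : ∀ i, ∑ t ∈ Icc 1 T, g t i * (w t i - wstar i)
      ≤ (D ^ 2 / (2 * η) + η) * √(ν' T i) := by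
    intro i
    -- `ν' 0` is unconstrained, so the accumulator of coordinate `i` is restarted at `0`
    set a : ℕ → ℝ := fun t => if t = 0 then 0 else ν' t i
    have hregret := sum_Icc_mul_sub_le_of_adagrad (a := a) (g := (g · i)) (x := (w · i))
      (y := wstar i) hη (by simp [a])
      (sm3_accumulator_add_sq_le S hS _ g μ' ν' (fun r => (hμ'0 r).ge) hν' hμ' i)
      (fun t ht => by simpa [a, Nat.one_le_iff_ne_zero.mp (mem_Icc.mp ht).1] using hiter t ht i)
      (fun t ht => (norm_le_pi_norm (w t - wstar) i).trans (hbound t ht))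
    refine hregret.trans (mul_le_mul_of_nonneg_left ?_ (by positivity))
    rcases T with _ | T <;> simp [a, Real.sqrt_nonneg]
  calc ∑ t ∈ Icc 1 T, (ℓ t (w t) - ℓ t wstar)
      ≤ ∑ t ∈ Icc 1 T, ∑ i, g t i * (w t i - wstar i) := sum_le_sum hlinear
    _ = ∑ i, ∑ t ∈ Icc 1 T, g t i * (w t i - wstar i) := sum_comm
    _ ≤ (D ^ 2 / (2 * η) + η) * ∑ i, √(ν' T i) := by
        rw [mul_sum]
        exact sum_le_sum fun i _ => hcoord i
end

section
/- With the SM3-II accumulators ν'_t(i), the sum of squared dual norms of the gradients is bounded by twice the trace of the final preconditioner: ∑_{t=1}^T ∑_{i : ν'_t(i) > 0} g_t(i)²/√(ν'_t(i)) ≤ 2 ∑_{i=1}^d √(ν'_T(i)). -/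
open Finset

/-- With the SM3-II accumulators `ν' t i`, the sum of squared dual norms of
the gradients is bounded by twice the trace of the final preconditioner:
`∑_{t=1}^T ∑_{i : ν' t i > 0} g t i ^ 2 / √(ν' t i) ≤ 2 ∑ i, √(ν' T i)`. -/
theorem sm3_II_dual_norm_sum_bound
    (d k T : ℕ) (hd : 0 < d) (hk : 0 < k) (hT : 0 < T)
    (S : Fin k → Finset (Fin d))
    (hS : ∀ r, (S r).Nonempty)
    (hcover : ∀ i : Fin d, ∃ r, i ∈ S r)
    (g : ℕ → Fin d → ℝ)
    (μ' : ℕ → Fin k → ℝ) (ν' : ℕ → Fin d → ℝ)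
    (hμ'0 : ∀ r, μ' 0 r = 0)
    (hν' : ∀ t, 1 ≤ t → ∀ i : Fin d, ν' t i =
      (Finset.univ.filter (fun r => i ∈ S r)).inf'
        (by obtain ⟨r, hr⟩ := hcover i
            exact ⟨r, Finset.mem_filter.mpr ⟨Finset.mem_univ r, hr⟩⟩)
        (fun r => μ' (t - 1) r) + g t i ^ 2)
    (hμ' : ∀ t, 1 ≤ t → ∀ r, μ' t r = (S r).sup' (hS r) (fun j => ν' t j)) :
    ∑ t ∈ Finset.Icc 1 T, ∑ i ∈ Finset.univ.filter (fun i : Fin d => 0 < ν' t i),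
        g t i ^ 2 / Real.sqrt (ν' t i)
      ≤ 2 * ∑ i : Fin d, Real.sqrt (ν' T i) := by
  classical
  -- w t i is ν' t i for t ≥ 1 and 0 for t = 0
  set w : ℕ → Fin d → ℝ := fun t i => if t = 0 then 0 else ν' t i with hw
  -- key step inequality
  have hstep : ∀ t, 1 ≤ t → ∀ i, w (t - 1) i + g t i ^ 2 ≤ ν' t i := by
    intro t ht i
    rw [hν' t ht i]
    have hle : w (t - 1) i ≤
        ((Finset.univ.filter (fun r => i ∈ S r)).inf'
          (by obtain ⟨r, hr⟩ := hcover i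
              exact ⟨r, Finset.mem_filter.mpr ⟨Finset.mem_univ r, hr⟩⟩)
          (fun r => μ' (t - 1) r)) := by
      apply Finset.le_inf'
      intro r hr
      rcases Nat.eq_or_lt_of_le ht with h1 | h2
      · -- t = 1
        subst h1
        simp [hw, hμ'0]
      · -- t ≥ 2, so t - 1 ≥ 1
        have ht1 : 1 ≤ t - 1 := by omega
        have htne : t - 1 ≠ 0 := by omega
        simp only [hw, htne, if_false]
        rw [hμ' (t - 1) ht1 r]
        exact Finset.le_sup' (fun j => ν' (t - 1) j) (Finset.mem_filter.mp hr).2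
    linarith
  -- nonnegativity of w
  have hnn : ∀ t i, 0 ≤ w t i := by
    intro t
    induction t with
    | zero => intro i; simp [hw]
    | succ n ih =>
      intro i
      have := hstep (n + 1) (by omega) i
      simp only [Nat.add_sub_cancel] at this
      have hg : 0 ≤ g (n + 1) i ^ 2 := sq_nonneg _
      have : 0 ≤ ν' (n + 1) i := by linarith [ih i]
      simpa [hw] using this
  -- nonnegativity of ν' for t ≥ 1
  have hν'nn : ∀ t, 1 ≤ t → ∀ i, 0 ≤ ν' t i := by
    intro t ht i
    have := hnn t i
    have htne : t ≠ 0 := by omega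
    simpa [hw, htne] using this
  -- per-term bound
  have hterm : ∀ t, 1 ≤ t → ∀ i : Fin d,
      (if 0 < ν' t i then g t i ^ 2 / Real.sqrt (ν' t i) else 0)
        ≤ 2 * (Real.sqrt (w t i) - Real.sqrt (w (t - 1) i)) := by
    intro t ht i
    have htne : t ≠ 0 := by omega
    have hwt : w t i = ν' t i := by simp [hw, htne]
    have hb : 0 ≤ w (t - 1) i := hnn (t - 1) i
    have hba : w (t - 1) i ≤ ν' t i := by
      have := hstep t ht i
      nlinarith [sq_nonneg (g t i)]
    by_cases hpos : 0 < ν' t i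
    · simp only [if_pos hpos]
      set a := ν' t i with ha
      set b := w (t - 1) i with hbdef
      have hsa : Real.sqrt a > 0 := Real.sqrt_pos.mpr hpos
      have hsa2 : Real.sqrt a ^ 2 = a := Real.sq_sqrt hpos.le
      have hsb2 : Real.sqrt b ^ 2 = b := Real.sq_sqrt hb
      have hsb : 0 ≤ Real.sqrt b := Real.sqrt_nonneg b
      have hg2 : g t i ^ 2 ≤ a - b := by
        have := hstep t ht i
        linarith
      rw [hwt, div_le_iff₀ hsa]
      nlinarith [sq_nonneg (Real.sqrt a - Real.sqrt b)]
    · simp only [if_neg hpos]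
      have : Real.sqrt (w (t - 1) i) ≤ Real.sqrt (w t i) := by
        apply Real.sqrt_le_sqrt
        rw [hwt]
        nlinarith [hstep t ht i, sq_nonneg (g t i)]
      linarith
  -- rewrite inner filtered sums as sums of if-terms and swap order
  have hrw : ∀ t ∈ Finset.Icc 1 T,
      (∑ i ∈ Finset.univ.filter (fun i : Fin d => 0 < ν' t i),
        g t i ^ 2 / Real.sqrt (ν' t i))
      = ∑ i : Fin d, (if 0 < ν' t i then g t i ^ 2 / Real.sqrt (ν' t i) else 0) := by
    intro t _
    rw [Finset.sum_filter]
  rw [Finset.sum_congr rfl hrw, Finset.sum_comm]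
  -- now bound per coordinate
  have hcoord : ∀ i : Fin d,
      (∑ t ∈ Finset.Icc 1 T,
        (if 0 < ν' t i then g t i ^ 2 / Real.sqrt (ν' t i) else 0))
      ≤ Real.sqrt (ν' T i) * 2 := by
    intro i
    have h1 : (∑ t ∈ Finset.Icc 1 T,
        (if 0 < ν' t i then g t i ^ 2 / Real.sqrt (ν' t i) else 0))
        ≤ ∑ t ∈ Finset.Icc 1 T, 2 * (Real.sqrt (w t i) - Real.sqrt (w (t - 1) i)) := by
      apply Finset.sum_le_sum
      intro t htmem
      exact hterm t (Finset.mem_Icc.mp htmem).1 i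
    have h2 : ∑ t ∈ Finset.Icc 1 T, (Real.sqrt (w t i) - Real.sqrt (w (t - 1) i))
        = Real.sqrt (w T i) - Real.sqrt (w 0 i) := by
      rw [← Finset.Ico_add_one_right_eq_Icc, Finset.sum_Ico_eq_sum_range]
      have : ∀ s ∈ Finset.range (T + 1 - 1),
          Real.sqrt (w (1 + s) i) - Real.sqrt (w (1 + s - 1) i)
          = Real.sqrt (w (s + 1) i) - Real.sqrt (w s i) := by
        intro s _
        rw [Nat.add_comm 1 s, Nat.add_sub_cancel]
      rw [Finset.sum_congr rfl this]
      have hT1 : T + 1 - 1 = T := by omega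
      rw [hT1, Finset.sum_range_sub (fun s => Real.sqrt (w s i))]
    have hTne : T ≠ 0 := by omega
    have hw0 : w 0 i = 0 := by simp [hw]
    have hwT : w T i = ν' T i := by simp [hw, hTne]
    calc (∑ t ∈ Finset.Icc 1 T,
        (if 0 < ν' t i then g t i ^ 2 / Real.sqrt (ν' t i) else 0))
        ≤ ∑ t ∈ Finset.Icc 1 T, 2 * (Real.sqrt (w t i) - Real.sqrt (w (t - 1) i)) := h1
      _ = 2 * (Real.sqrt (w T i) - Real.sqrt (w 0 i)) := by
          rw [← Finset.mul_sum, h2]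
      _ = Real.sqrt (ν' T i) * 2 := by
          rw [hw0, hwT, Real.sqrt_zero]; ring
  calc (∑ i : Fin d, ∑ t ∈ Finset.Icc 1 T,
        (if 0 < ν' t i then g t i ^ 2 / Real.sqrt (ν' t i) else 0))
      ≤ ∑ i : Fin d, Real.sqrt (ν' T i) * 2 := Finset.sum_le_sum fun i _ => hcoord i
    _ = 2 * ∑ i : Fin d, Real.sqrt (ν' T i) := by rw [← Finset.sum_mul]; ring
end
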